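/- arXiv:1903.08888 — 3 statements merged into one kernel-verified Lean document; each statement's English description precedes it below -/
import Mathlib

section
/- Let X be a third-order tensor with entries X(i₁,i₂,i₃) = Tr(G₁(i₁)·G₂(i₂)·G₃(i₃)) where Gₖ(iₖ) ∈ ℝ^{r_{k-1}×r_k} (indices mod 3, r₀ = r₃). Then the matrix X₍₁₎ of size I₁ × (I₂I₃) obtained by unfolding X along the first mode has rank at most r₃·r₁. -/
/-!
Writing `Tr(G₁(i₁) · (G₂(i₂) G₃(i₃)))` as `∑_{(a,b)} G₁(i₁)_{ab} (G₂(i₂) G₃(i₃))_{ba}` factors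
the unfolding through the `r₃ r₁` entries of `G₁(i₁)`, so its rank is at most `r₃ r₁`.
-/

namespace Matrix

variable {ι κ m n R : Type*} [Fintype m] [Fintype n]

theorem of_trace_mul_eq_mul [CommSemiring R] (A : ι → Matrix m n R) (B : κ → Matrix n m R) :
    of (fun i j => trace (A i * B j)) =
      of (fun i (p : m × n) => A i p.1 p.2) * of (fun (p : m × n) j => B j p.2 p.1) := by
  ext i j
  simp [mul_apply, trace, Fintype.sum_prod_type]

theorem rank_of_trace_mul_le [Fintype κ] [CommSemiring R] [StrongRankCondition R]
    (A : ι → Matrix m n R) (B : κ → Matrix n m R) :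
    (of fun i j => trace (A i * B j)).rank ≤ Fintype.card m * Fintype.card n := by
  rw [of_trace_mul_eq_mul, ← Fintype.card_prod]
  exact (rank_mul_le_left _ _).trans (rank_le_card_width _)

end Matrix

/-- TR bound for a third-order tensor: if
`X(i₁,i₂,i₃) = Tr(G₁(i₁)·G₂(i₂)·G₃(i₃))` with `G₁(i₁) ∈ ℝ^{r₃×r₁}`,
`G₂(i₂) ∈ ℝ^{r₁×r₂}`, `G₃(i₃) ∈ ℝ^{r₂×r₃}`, then the mode-1 unfolding
`X₍₁₎ ∈ ℝ^{I₁ × (I₂I₃)}` has rank at most `r₃·r₁`. -/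
theorem rank_mode1_unfolding_le_TR_rank (I₁ I₂ I₃ r₁ r₂ r₃ : ℕ)
    (G₁ : Fin I₁ → Matrix (Fin r₃) (Fin r₁) ℝ)
    (G₂ : Fin I₂ → Matrix (Fin r₁) (Fin r₂) ℝ)
    (G₃ : Fin I₃ → Matrix (Fin r₂) (Fin r₃) ℝ)
    (X₁ : Matrix (Fin I₁) (Fin I₂ × Fin I₃) ℝ)
    (hX : ∀ i₁ i₂ i₃, X₁ i₁ (i₂, i₃) = Matrix.trace (G₁ i₁ * G₂ i₂ * G₃ i₃)) :
    X₁.rank ≤ r₃ * r₁ := by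
  have hX₁ : X₁ = Matrix.of fun i₁ q => Matrix.trace (G₁ i₁ * (G₂ q.1 * G₃ q.2)) := by
    ext i₁ ⟨i₂, i₃⟩
    rw [hX, Matrix.of_apply, Matrix.mul_assoc]
  rw [hX₁]
  have h := Matrix.rank_of_trace_mul_le G₁ fun q : Fin I₂ × Fin I₃ => G₂ q.1 * G₃ q.2
  rw [Fintype.card_fin, Fintype.card_fin] at h
  exact h
end

section
/- Let X be an N-th order tensor admitting a tensor ring decomposition with cores Gₖ(iₖ) ∈ ℝ^{r_{k-1}×r_k} (r₀ = r_N), i.e., X(i₁,…,i_N) = Tr(G₁(i₁)⋯G_N(i_N)). For any 1 ≤ d < N and any mode k, the circular unfolding matrix X_{<k,d>}, whose rows are indexed by the d consecutive (cyclic) indices ending at k and columns by the remaining N−d indices, satisfies rank(X_{<k,d>}) ≤ r_k · r_{t-1}, where t = k−d+1 taken cyclically modulo N. -/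
open Matrix

/-- Ordered product `G_a · G_{a+1} · ⋯ · G_{a+m-1}` of a cyclic chain of
matrices `G_j ∈ ℝ^{D j × D (j+1)}`, indices in `ZMod N`. -/
noncomputable def chainProd {N : ℕ} (D : ZMod N → ℕ)
    (G : ∀ j : ZMod N, Matrix (Fin (D j)) (Fin (D (j + 1))) ℝ) (a : ZMod N) :
    (m : ℕ) → Matrix (Fin (D a)) (Fin (D (a + (m : ZMod N)))) ℝ
  | 0 => cast (by rw [Nat.cast_zero, add_zero]) (1 : Matrix (Fin (D a)) (Fin (D a)) ℝ)
  | (m + 1) =>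
      cast (by rw [show a + ((m : ℕ) : ZMod N) + 1 = a + (((m + 1 : ℕ)) : ZMod N) by
        push_cast; ring])
      (chainProd D G a m * G (a + (m : ZMod N)))

/-- The tensor circular unfolding `X_{<k,d>}` of an `N`-th order tensor
`X ∈ ℝ^{I₁×⋯×I_N}`: rows are indexed by the `d` consecutive cyclic modes
ending at mode `k` (i.e. modes `j` with `(k - j).val < d`), columns by the
remaining `N - d` modes. -/
def circUnfold {N : ℕ} [NeZero N] (I : ZMod N → ℕ) (k : ZMod N) (d : ℕ)
    (X : (∀ j : ZMod N, Fin (I j)) → ℝ) :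
    Matrix (∀ j : {j : ZMod N // (k - j).val < d}, Fin (I j.1))
           (∀ j : {j : ZMod N // ¬ (k - j).val < d}, Fin (I j.1)) ℝ :=
  fun r c => X fun j => if h : (k - j).val < d then r ⟨j, h⟩ else c ⟨j, h⟩

section helpers
variable {N : ℕ} (D : ZMod N → ℕ)

lemma hmul {p q r p' q' r' : ℕ} (hp : p = p') (hq : q = q') (hr : r = r')
    {A : Matrix (Fin p) (Fin q) ℝ} {A' : Matrix (Fin p') (Fin q') ℝ}
    {B : Matrix (Fin q) (Fin r) ℝ} {B' : Matrix (Fin q') (Fin r') ℝ}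
    (hA : HEq A A') (hB : HEq B B') : HEq (A * B) (A' * B') := by
  subst hp; subst hq; subst hr; rw [eq_of_heq hA, eq_of_heq hB]

lemma htrace {p q : ℕ} (h : p = q) {A : Matrix (Fin p) (Fin p) ℝ}
    {B : Matrix (Fin q) (Fin q) ℝ} (hAB : HEq A B) : trace A = trace B := by
  subst h; rw [eq_of_heq hAB]

variable (G : ∀ j : ZMod N, Matrix (Fin (D j)) (Fin (D (j + 1))) ℝ)

lemma chainProd_arg {a b : ZMod N} (h : a = b) (m : ℕ) :
    HEq (chainProd D G a m) (chainProd D G b m) := by subst h; rfl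

lemma chainProd_natarg (a : ZMod N) {m n : ℕ} (h : m = n) :
    HEq (chainProd D G a m) (chainProd D G a n) := by subst h; rfl

lemma chainProd_zero_heq (a : ZMod N) :
    HEq (chainProd D G a 0) (1 : Matrix (Fin (D a)) (Fin (D a)) ℝ) := by
  rw [chainProd]; exact cast_heq _ _

lemma chainProd_succ_heq (a : ZMod N) (m : ℕ) :
    HEq (chainProd D G a (m + 1)) (chainProd D G a m * G (a + (m : ZMod N))) := by
  rw [chainProd]; exact cast_heq _ _

lemma dcong {a b : ZMod N} (h : a = b) : D a = D b := congrArg D h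

lemma chainProd_split (a : ZMod N) (m n : ℕ) :
    HEq (chainProd D G a (m + n)) (chainProd D G a m * chainProd D G (a + (m : ZMod N)) n) := by
  induction n with
  | zero =>
    refine HEq.trans (heq_of_eq (Matrix.mul_one (chainProd D G a m)).symm) ?_
    exact hmul rfl rfl (dcong D (by push_cast; ring)) HEq.rfl (chainProd_zero_heq D G _).symm
  | succ n ih =>
    have h1 : HEq (chainProd D G a (m + (n+1)))
        (chainProd D G a (m + n) * G (a + ((m + n : ℕ) : ZMod N))) :=
      chainProd_succ_heq D G a (m + n)
    have h2 : HEq (chainProd D G a (m + n) * G (a + ((m + n : ℕ) : ZMod N)))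
        ((chainProd D G a m * chainProd D G (a + (m : ZMod N)) n) *
          G (a + (m : ZMod N) + (n : ZMod N))) := by
      refine hmul rfl (dcong D (by push_cast; ring)) (dcong D (by push_cast; ring)) ih ?_
      have : a + ((m + n : ℕ) : ZMod N) = a + (m : ZMod N) + (n : ZMod N) := by push_cast; ring
      rw [this]
    refine ((h1.trans h2).trans (heq_of_eq (Matrix.mul_assoc _ _ _))).trans ?_
    exact hmul rfl rfl (dcong D (by push_cast; ring)) HEq.rfl (chainProd_succ_heq D G _ n).symm

lemma chainProd_congr {G₂ : ∀ j : ZMod N, Matrix (Fin (D j)) (Fin (D (j + 1))) ℝ}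
    (a : ZMod N) (m : ℕ) (h : ∀ s < m, G (a + (s : ZMod N)) = G₂ (a + (s : ZMod N))) :
    chainProd D G a m = chainProd D G₂ a m := by
  induction m with
  | zero => rfl
  | succ m ih =>
    rw [chainProd, chainProd, ih (fun s hs => h s (hs.trans (Nat.lt_succ_self m))),
      h m (Nat.lt_succ_self m)]

lemma trace_cyclic (a b : ZMod N) (m : ℕ) (hm : m ≤ N) (hab : b = a + (m : ZMod N))
    {A : Matrix (Fin (D a)) (Fin (D a)) ℝ} {B : Matrix (Fin (D b)) (Fin (D b)) ℝ}
    (hA : HEq A (chainProd D G a N)) (hB : HEq B (chainProd D G b N)) :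
    trace A = trace B := by
  subst hab
  obtain ⟨n, hmn⟩ : ∃ n, N = m + n := ⟨N - m, (Nat.add_sub_cancel' hm).symm⟩
  have e1 : a + (m : ZMod N) + (n : ZMod N) = a := by
    have : ((m : ℕ) : ZMod N) + ((n : ℕ) : ZMod N) = ((N : ℕ) : ZMod N) := by
      rw [hmn]; push_cast; ring
    rw [add_assoc, this, ZMod.natCast_self, add_zero]
  set P1 := chainProd D G a m with hP1
  set P2 := chainProd D G (a + (m : ZMod N)) n with hP2
  have hc : Matrix (Fin (D (a + (m:ZMod N)))) (Fin (D (a + (m:ZMod N) + (n:ZMod N)))) ℝ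
      = Matrix (Fin (D (a + (m:ZMod N)))) (Fin (D a)) ℝ := by rw [e1]
  set P2' : Matrix (Fin (D (a + (m:ZMod N)))) (Fin (D a)) ℝ := cast hc P2 with hP2'
  have hAeq : A = P1 * P2' := by
    refine eq_of_heq (hA.trans ?_)
    refine HEq.trans ?_ (hmul rfl rfl (dcong D e1) HEq.rfl (cast_heq hc P2).symm)
    exact (chainProd_natarg D G a hmn).trans (chainProd_split D G a m n)
  have hBeq : B = P2' * P1 := by
    refine eq_of_heq (hB.trans ?_)
    have h1 : HEq (chainProd D G (a + (m:ZMod N)) N)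
        (P2 * chainProd D G (a + (m:ZMod N) + (n:ZMod N)) m) :=
      (chainProd_natarg D G _ (by omega : N = n + m)).trans
        (chainProd_split D G (a + (m:ZMod N)) n m)
    refine h1.trans ?_
    exact hmul rfl (dcong D e1) (dcong D (by rw [e1])) (cast_heq hc P2).symm
      (chainProd_arg D G e1 m)
  rw [hAeq, hBeq, Matrix.trace_mul_comm]
end helpers

/-- **Theorem 1 of the paper.** If the `N`-th order tensor `X` is in TR-format
with cores `G_j(i_j) ∈ ℝ^{D j × D (j+1)}` (so, in the paper's notation,
`r_j = D (j+1)` and in particular `r_k = D (k+1)`, `r_{t-1} = D t` with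
`t = k - d + 1` cyclically), i.e. `X(i₁,…,i_N) = Tr(G₀(i₀)⋯G_{N-1}(i_{N-1}))`,
then the circular unfolding satisfies
`rank X_{<k,d>} ≤ r_k · r_{t-1} = D (k+1) · D (k - d + 1)`. -/
theorem rank_circUnfold_le_TR_ranks {N : ℕ} [NeZero N] (I D : ZMod N → ℕ)
    (G : ∀ j : ZMod N, Fin (I j) → Matrix (Fin (D j)) (Fin (D (j + 1))) ℝ)
    (X : (∀ j : ZMod N, Fin (I j)) → ℝ)
    (hX : ∀ i, X i = Matrix.trace
      (cast (by rw [ZMod.natCast_self, add_zero])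
        (chainProd D (fun j => G j (i j)) 0 N) : Matrix (Fin (D 0)) (Fin (D 0)) ℝ))
    (k : ZMod N) (d : ℕ) (hd1 : 1 ≤ d) (hdN : d < N) :
    (circUnfold I k d X).rank ≤ D (k + 1) * D (k - (d : ZMod N) + 1) := by
  classical
  set t : ZMod N := k - (d : ZMod N) + 1 with ht
  have htk : t + (d : ZMod N) = k + 1 := by rw [ht]; ring
  have hNd : ((N - d : ℕ) : ZMod N) = - (d : ZMod N) := by
    rw [Nat.cast_sub hdN.le, ZMod.natCast_self, zero_sub]
  have htc : (k + 1) + ((N - d : ℕ) : ZMod N) = t := by rw [hNd, ht]; ring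
  have hc1 : Matrix (Fin (D t)) (Fin (D (t + (d : ZMod N)))) ℝ
      = Matrix (Fin (D t)) (Fin (D (k + 1))) ℝ := by rw [htk]
  have hc2 : Matrix (Fin (D (k+1))) (Fin (D (k + 1 + ((N - d : ℕ) : ZMod N)))) ℝ
      = Matrix (Fin (D (k+1))) (Fin (D t)) ℝ := by rw [htc]
  set gr : (∀ j : {j : ZMod N // (k - j).val < d}, Fin (I j.1)) →
      ∀ j : ZMod N, Matrix (Fin (D j)) (Fin (D (j + 1))) ℝ :=
    fun r j => if h : (k - j).val < d then G j (r ⟨j, h⟩) else 0 with hgr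
  set gc : (∀ j : {j : ZMod N // ¬ (k - j).val < d}, Fin (I j.1)) →
      ∀ j : ZMod N, Matrix (Fin (D j)) (Fin (D (j + 1))) ℝ :=
    fun c j => if h : (k - j).val < d then 0 else G j (c ⟨j, h⟩) with hgc
  set RowM : Matrix (∀ j : {j : ZMod N // (k - j).val < d}, Fin (I j.1))
      (Fin (D (k+1)) × Fin (D t)) ℝ :=
    fun r p => (cast hc1 (chainProd D (gr r) t d)) p.2 p.1 with hRowM
  set ColM : Matrix (Fin (D (k+1)) × Fin (D t))
      (∀ j : {j : ZMod N // ¬ (k - j).val < d}, Fin (I j.1)) ℝ :=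
    fun p c => (cast hc2 (chainProd D (gc c) (k+1) (N - d))) p.1 p.2 with hColM
  have key : circUnfold I k d X = RowM * ColM := by
    ext r c
    set i : ∀ j : ZMod N, Fin (I j) :=
      fun j => if h : (k - j).val < d then r ⟨j, h⟩ else c ⟨j, h⟩ with hi
    set Gi : ∀ j : ZMod N, Matrix (Fin (D j)) (Fin (D (j + 1))) ℝ :=
      fun j => G j (i j) with hGi
    set A₁ : Matrix (Fin (D t)) (Fin (D (k+1))) ℝ := cast hc1 (chainProd D Gi t d) with hA₁
    set B₁ : Matrix (Fin (D (k+1))) (Fin (D t)) ℝ :=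
      cast hc2 (chainProd D Gi (k+1) (N - d)) with hB₁
    have step1 : X i = trace (A₁ * B₁) := by
      rw [hX i]
      refine trace_cyclic D Gi 0 t t.val (ZMod.val_lt t).le
        (by rw [zero_add, ZMod.natCast_rightInverse t]) (cast_heq _ _) ?_
      have h1 : HEq (chainProd D Gi t N) (chainProd D Gi t (d + (N - d))) :=
        chainProd_natarg D Gi t (by omega)
      have h2 := chainProd_split D Gi t d (N - d)
      have h3 : HEq (chainProd D Gi t d * chainProd D Gi (t + (d : ZMod N)) (N - d))
          (A₁ * B₁) := by
        refine hmul rfl (dcong D htk) (dcong D (by rw [htk, htc]))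
          (cast_heq hc1 _).symm ?_
        exact (chainProd_arg D Gi htk (N - d)).trans (cast_heq hc2 _).symm
      exact (h1.trans (h2.trans h3)).symm
    have step2 : A₁ = cast hc1 (chainProd D (gr r) t d) := by
      rw [hA₁]
      congr 1
      refine chainProd_congr D Gi t d (fun s hs => ?_)
      have hj : (k - (t + (s : ZMod N))).val < d := by
        have e : k - (t + (s : ZMod N)) = ((d - 1 - s : ℕ) : ZMod N) := by
          rw [Nat.cast_sub (by omega : s ≤ d - 1), Nat.cast_sub hd1, Nat.cast_one, ht]
          ring
        rw [e, ZMod.val_cast_of_lt (by omega : d - 1 - s < N)]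
        omega
      simp only [hGi, hgr, hi, dif_pos hj]
    have step3 : B₁ = cast hc2 (chainProd D (gc c) (k + 1) (N - d)) := by
      rw [hB₁]
      congr 1
      refine chainProd_congr D Gi (k + 1) (N - d) (fun s hs => ?_)
      have hj : ¬ (k - (k + 1 + (s : ZMod N))).val < d := by
        have e : k - (k + 1 + (s : ZMod N)) = ((N - 1 - s : ℕ) : ZMod N) := by
          rw [Nat.cast_sub (by omega : s ≤ N - 1), Nat.cast_sub (by omega : 1 ≤ N),
            Nat.cast_one, ZMod.natCast_self]
          ring
        rw [e, ZMod.val_cast_of_lt (by omega : N - 1 - s < N)]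
        omega
      simp only [hGi, hgc, hi, dif_neg hj]
    have lhs : circUnfold I k d X r c = X i := rfl
    have rhs : (RowM * ColM) r c = trace (A₁ * B₁) := by
      rw [Matrix.mul_apply]
      simp only [hRowM, hColM, ← step2, ← step3]
      rw [Matrix.trace]
      simp only [Matrix.diag, Matrix.mul_apply]
      rw [Fintype.sum_prod_type]
      exact Finset.sum_comm
    rw [lhs, rhs, step1]
  rw [key]
  refine le_trans (Matrix.rank_mul_le_left RowM ColM) (le_trans (Matrix.rank_le_card_width RowM) ?_)
  simp [ht]
end

section
/- Singular value thresholding solves the nuclear norm proximal problem: for any matrix Y ∈ ℝ^{m×n} and τ > 0, the matrix D_τ(Y) = U·max(S − τI, 0)·Vᵀ (where Y = USVᵀ is an SVD of Y) is the unique minimizer of τ‖M‖₊ + (1/2)‖M − Y‖_F² over M ∈ ℝ^{m×n}. -/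
open Matrix

/-- The nuclear norm of a real matrix: the trace of `√(AᵀA)` (sum of singular values). -/
noncomputable def nuclearNorm {m n : Type*} [Fintype m] [Fintype n] [DecidableEq n]
    (A : Matrix m n ℝ) : ℝ :=
  Matrix.trace
    (((Matrix.posSemidef_conjTranspose_mul_self A).1.eigenvectorUnitary : Matrix n n ℝ) *
      diagonal (Real.sqrt ∘ (Matrix.posSemidef_conjTranspose_mul_self A).1.eigenvalues) *
      (star (Matrix.posSemidef_conjTranspose_mul_self A).1.eigenvectorUnitary : Matrix n n ℝ))

/-- The squared Frobenius norm of a matrix. -/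
def frobSq {m n : Type*} [Fintype m] [Fintype n] (A : Matrix m n ℝ) : ℝ :=
  ∑ i, ∑ j, (A i j) ^ 2

/-!
Conjugation by the orthogonal factors `U`, `V` preserves both the nuclear and the Frobenius norm,
so `S` may be taken rectangular diagonal. The nuclear norm of any `N` dominates the `ℓ¹` norm of
its diagonal, with equality for `max (S - τ I) 0`; on the diagonal the problem then splits into
the scalar problems `τ |x| + (x - s)² / 2`, minimised at `max (s - τ) 0` with quadratic growth
`(x - max (s - τ) 0)² / 2`. Summing gives `F(D) + ‖M - D‖²_F / 2 ≤ F(M)` for the objective `F`,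
which is both minimality and uniqueness.
-/

open Relator

variable {m n m' n' : Type*} [Fintype m] [Fintype n] [Fintype m'] [Fintype n']

lemma frobSq_eq_trace (A : Matrix m n ℝ) : frobSq A = trace (Aᵀ * A) := by
  rw [frobSq, Finset.sum_comm]
  simp [trace, mul_apply, sq]

lemma frobSq_transpose (A : Matrix m n ℝ) : frobSq Aᵀ = frobSq A :=
  Finset.sum_comm

lemma frobSq_nonneg (A : Matrix m n ℝ) : 0 ≤ frobSq A := by
  unfold frobSq; positivity

lemma frobSq_eq_zero_iff {A : Matrix m n ℝ} : frobSq A = 0 ↔ A = 0 := by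
  rw [frobSq_eq_trace, ← conjTranspose_eq_transpose_of_trivial,
    trace_conjTranspose_mul_self_eq_zero_iff]

lemma frobSq_isometry_mul [DecidableEq m] (U : Matrix m' m ℝ) (hU : Uᵀ * U = 1) (A : Matrix m n ℝ) :
    frobSq (U * A) = frobSq A := by
  rw [frobSq_eq_trace, frobSq_eq_trace, transpose_mul, Matrix.mul_assoc, ← Matrix.mul_assoc Uᵀ,
    hU, Matrix.one_mul]

lemma frobSq_mul_coisometry [DecidableEq n] (A : Matrix m n ℝ) (W : Matrix n n' ℝ) (hW : W * Wᵀ = 1) :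
    frobSq (A * W) = frobSq A := by
  rw [← frobSq_transpose, transpose_mul, frobSq_isometry_mul _ (by rwa [transpose_transpose]),
    frobSq_transpose]

section NuclearNorm

open scoped MatrixOrder

lemma nuclearNorm_eq_trace_sqrt [DecidableEq n] (A : Matrix m n ℝ) :
    nuclearNorm A = trace (CFC.sqrt (Aᵀ * A)) := by
  have hA := posSemidef_conjTranspose_mul_self A
  rw [← conjTranspose_eq_transpose_of_trivial, CFC.sqrt_eq_cfc, cfc_nnreal_eq_real _ _ hA.nonneg,
    hA.1.cfc_eq]
  simp only [nuclearNorm, IsHermitian.cfc]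
  congr 4
  ext i
  simp only [Function.comp_apply, RCLike.ofReal_real_eq_id, id_eq, Real.coe_sqrt,
    Real.coe_toNNReal', max_eq_left (hA.eigenvalues_nonneg i)]

lemma posSemidef_transpose_mul_self (A : Matrix m n ℝ) : (Aᵀ * A).PosSemidef := by
  simpa [conjTranspose_eq_transpose_of_trivial] using posSemidef_conjTranspose_mul_self A

lemma sqrt_transpose_mul_mul_coisometry [DecidableEq n] [DecidableEq n'] {P : Matrix n n ℝ}
    (hP : P.PosSemidef) (W : Matrix n n' ℝ) (hW : W * Wᵀ = 1) :
    CFC.sqrt (Wᵀ * P * W) = Wᵀ * CFC.sqrt P * W := by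
  refine CFC.sqrt_unique ?_ ?_
  · calc Wᵀ * CFC.sqrt P * W * (Wᵀ * CFC.sqrt P * W)
        = Wᵀ * CFC.sqrt P * (W * Wᵀ) * CFC.sqrt P * W := by simp only [Matrix.mul_assoc]
      _ = Wᵀ * P * W := by
        rw [hW, Matrix.mul_one, Matrix.mul_assoc Wᵀ, CFC.sqrt_mul_sqrt_self P hP.nonneg]
  · simpa [nonneg_iff_posSemidef, conjTranspose_eq_transpose_of_trivial] using
      (nonneg_iff_posSemidef.mp (CFC.sqrt_nonneg P)).conjTranspose_mul_mul_same W

lemma nuclearNorm_isometry_mul [DecidableEq n] [DecidableEq m] (U : Matrix m' m ℝ) (hU : Uᵀ * U = 1)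
    (A : Matrix m n ℝ) : nuclearNorm (U * A) = nuclearNorm A := by
  rw [nuclearNorm_eq_trace_sqrt, nuclearNorm_eq_trace_sqrt, transpose_mul, Matrix.mul_assoc,
    ← Matrix.mul_assoc Uᵀ, hU, Matrix.one_mul]

lemma nuclearNorm_mul_coisometry [DecidableEq n] [DecidableEq n'] (A : Matrix m n ℝ)
    (W : Matrix n n' ℝ) (hW : W * Wᵀ = 1) : nuclearNorm (A * W) = nuclearNorm A := by
  rw [nuclearNorm_eq_trace_sqrt, nuclearNorm_eq_trace_sqrt, transpose_mul, Matrix.mul_assoc,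
    ← Matrix.mul_assoc Aᵀ, ← Matrix.mul_assoc,
    sqrt_transpose_mul_mul_coisometry (posSemidef_transpose_mul_self A) W hW, trace_mul_cycle, hW,
    Matrix.one_mul]

lemma nuclearNorm_eq_sum_of_transpose_mul_self_eq_diagonal [DecidableEq n] {T : Matrix m n ℝ}
    {t : n → ℝ} (ht : 0 ≤ t) (hT : Tᵀ * T = diagonal (t ^ 2)) : nuclearNorm T = ∑ j, t j := by
  rw [nuclearNorm_eq_trace_sqrt, hT, CFC.sqrt_unique (b := diagonal t) ?_ ?_, trace_diagonal]
  · rw [diagonal_mul_diagonal, sq]; rfl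
  · exact nonneg_iff_posSemidef.mpr (posSemidef_diagonal_iff.mpr ht)

end NuclearNorm

section Matching

variable {R : m → n → Prop}

lemma sum_ite_abs_mul_abs_le_of_biUnique [DecidableRel R] (hR : BiUnique R) (a : m → ℝ)
    (b : n → ℝ) :
    ∑ i, ∑ j, (if R i j then |a i| * |b j| else 0) ≤ √(∑ i, a i ^ 2) * √(∑ j, b j ^ 2) := by
  classical
  set s := Finset.univ.filter fun p : m × n => R p.1 p.2
  have hs : ∀ p ∈ s, R p.1 p.2 := fun p hp => (Finset.mem_filter.mp hp).2
  have hfst : ∑ p ∈ s, |a p.1| ^ 2 ≤ ∑ i, a i ^ 2 := by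
    rw [← Finset.sum_image (g := Prod.fst) (f := fun i => |a i| ^ 2)
      fun p hp q hq h => Prod.ext h (hR.2 (hs p hp) (h ▸ hs q hq))]
    simpa using Finset.sum_le_univ_sum_of_nonneg (fun i => sq_nonneg (a i))
  have hsnd : ∑ p ∈ s, |b p.2| ^ 2 ≤ ∑ j, b j ^ 2 := by
    rw [← Finset.sum_image (g := Prod.snd) (f := fun j => |b j| ^ 2)
      fun p hp q hq h => Prod.ext (hR.1 (hs p hp) (h ▸ hs q hq)) h]
    simpa using Finset.sum_le_univ_sum_of_nonneg (fun j => sq_nonneg (b j))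
  calc ∑ i, ∑ j, (if R i j then |a i| * |b j| else 0) = ∑ p ∈ s, |a p.1| * |b p.2| := by
        rw [Finset.sum_filter, Fintype.sum_prod_type]
    _ ≤ √(∑ p ∈ s, |a p.1| ^ 2) * √(∑ p ∈ s, |b p.2| ^ 2) := Real.sum_mul_le_sqrt_mul_sqrt _ _ _
    _ ≤ √(∑ i, a i ^ 2) * √(∑ j, b j ^ 2) := by gcongr

lemma sum_ite_abs_le_nuclearNorm_of_biUnique [DecidableRel R] [DecidableEq n] (hR : BiUnique R)
    (N : Matrix m n ℝ) : ∑ i, ∑ j, (if R i j then |N i j| else 0) ≤ nuclearNorm N := by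
  -- Expand `N` in an eigenbasis `Q` of `NᵀN`: the columns of `N Q` have norms `√dₖ` and the
  -- columns of `Q` are unit vectors, so Cauchy–Schwarz along the matching bounds each term.
  set H := (posSemidef_conjTranspose_mul_self N).1
  set Q : Matrix n n ℝ := ↑H.eigenvectorUnitary
  set d := H.eigenvalues
  have hQ : star Q * Q = 1 := Unitary.coe_star_mul_self _
  have hnuc : nuclearNorm N = ∑ k, √(d k) := by
    rw [nuclearNorm, trace_mul_cycle, hQ, Matrix.one_mul, trace_diagonal]; rfl
  have hcol (k : n) : ∑ i, (N * Q) i k ^ 2 = d k := by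
    have h := H.conjStarAlgAut_star_eigenvectorUnitary
    rw [Unitary.conjStarAlgAut_star_apply, RCLike.ofReal_real_eq_id, Function.id_comp] at h
    change star Q * (Nᴴ * N) * Q = diagonal d at h
    rw [star_eq_conjTranspose, conjTranspose_eq_transpose_of_trivial,
      conjTranspose_eq_transpose_of_trivial] at h
    have hdiag : (N * Q)ᵀ * (N * Q) = diagonal d := by
      rw [← h, transpose_mul]
      simp only [Matrix.mul_assoc]
    simpa [mul_apply, sq, mul_comm] using congrFun (congrFun hdiag k) k
  have hQcol (k : n) : ∑ j, Q j k ^ 2 = 1 := by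
    simpa [mul_apply, sq] using congrFun (congrFun hQ k) k
  have hexp (i : m) (j : n) : N i j = ∑ k, (N * Q) i k * Q j k := by
    have h : N = N * Q * star Q := by
      rw [Matrix.mul_assoc, mul_eq_one_comm.mp hQ, Matrix.mul_one]
    conv_lhs => rw [h]
    simp [mul_apply]
  calc ∑ i, ∑ j, (if R i j then |N i j| else 0)
      ≤ ∑ i, ∑ j, ∑ k, (if R i j then |(N * Q) i k| * |Q j k| else 0) := by
        refine Finset.sum_le_sum fun i _ => Finset.sum_le_sum fun j _ => ?_
        split_ifs
        · rw [hexp i j]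
          exact (Finset.abs_sum_le_sum_abs _ _).trans_eq (by simp only [abs_mul])
        · simp
    _ = ∑ k, ∑ i, ∑ j, (if R i j then |(N * Q) i k| * |Q j k| else 0) :=
        (Finset.sum_congr rfl fun _ _ => Finset.sum_comm).trans Finset.sum_comm
    _ ≤ ∑ k, √(d k) * √1 := by
        refine Finset.sum_le_sum fun k _ => ?_
        rw [← hcol k, ← hQcol k]
        exact sum_ite_abs_mul_abs_le_of_biUnique hR _ _
    _ = nuclearNorm N := by simp [hnuc]

omit [Fintype n] in
lemma transpose_mul_self_eq_diagonal_of_biUnique [DecidableEq n] (hR : BiUnique R)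
    {T : Matrix m n ℝ} (hT : ∀ i j, ¬R i j → T i j = 0) :
    Tᵀ * T = diagonal fun j => (∑ i, T i j) ^ 2 := by
  ext j k
  simp only [mul_apply, transpose_apply]
  by_cases hjk : j = k
  · subst hjk
    rw [diagonal_apply_eq, sq]
    by_cases h : ∃ i, R i j
    · obtain ⟨i₀, hi₀⟩ := h
      have hcol (i : m) (hi : i ≠ i₀) : T i j = 0 := hT i j fun h => hi (hR.1 h hi₀)
      rw [Finset.sum_eq_single i₀ (fun i _ hi => by rw [hcol i hi, zero_mul]) (by simp),
        Finset.sum_eq_single i₀ (fun i _ hi => hcol i hi) (by simp)]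
    · simp only [not_exists] at h
      simp [hT _ _ (h _)]
  · rw [diagonal_apply_ne _ hjk]
    refine Finset.sum_eq_zero fun i _ => ?_
    by_cases h : R i j
    · rw [hT i k fun h' => hjk (hR.2 h h'), mul_zero]
    · rw [hT i j h, zero_mul]

lemma nuclearNorm_eq_sum_of_biUnique [DecidableEq n] (hR : BiUnique R) {T : Matrix m n ℝ}
    (hT : ∀ i j, ¬R i j → T i j = 0) (hT₀ : ∀ i j, 0 ≤ T i j) :
    nuclearNorm T = ∑ i, ∑ j, T i j := by
  rw [nuclearNorm_eq_sum_of_transpose_mul_self_eq_diagonal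
    (fun j => Finset.sum_nonneg fun i _ => hT₀ i j)
    (transpose_mul_self_eq_diagonal_of_biUnique hR hT), Finset.sum_comm]

end Matching

lemma threshold_prox_le {τ s : ℝ} (hτ : 0 ≤ τ) (hs : 0 ≤ s) (x : ℝ) :
    τ * max (s - τ) 0 + (max (s - τ) 0 - s) ^ 2 / 2 + (x - max (s - τ) 0) ^ 2 / 2
      ≤ τ * |x| + (x - s) ^ 2 / 2 := by
  have hx := le_abs_self x
  rcases le_total s τ with h | h
  · rw [max_eq_right (by linarith)]
    nlinarith [mul_nonneg hs (sub_nonneg.mpr hx), mul_nonneg (sub_nonneg.mpr h) (abs_nonneg x)]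
  · rw [max_eq_left (by linarith)]
    nlinarith [mul_nonneg hτ (sub_nonneg.mpr hx)]

/-- For `R i j ↔ (i : ℕ) = j` and rectangular diagonal `S`, this is `max (S - τ I) 0`. -/
def thresholdOn (R : m → n → Prop) [DecidableRel R] (τ : ℝ) (S : Matrix m n ℝ) : Matrix m n ℝ :=
  of fun i j => if R i j then max (S i j - τ) 0 else 0

noncomputable def proxObjective [DecidableEq n] (τ : ℝ) (Y M : Matrix m n ℝ) : ℝ :=
  τ * nuclearNorm M + 1 / 2 * frobSq (M - Y)

lemma proxObjective_conj [DecidableEq m] [DecidableEq n] [DecidableEq n'] (τ : ℝ)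
    {U : Matrix m' m ℝ} {V : Matrix n' n ℝ} (hU : Uᵀ * U = 1) (hV : Vᵀ * V = 1)
    (Y M : Matrix m n ℝ) : proxObjective τ (U * Y * Vᵀ) (U * M * Vᵀ) = proxObjective τ Y M := by
  have hV' : Vᵀ * Vᵀᵀ = 1 := by rwa [transpose_transpose]
  rw [proxObjective, proxObjective, ← Matrix.sub_mul, ← Matrix.mul_sub,
    nuclearNorm_mul_coisometry _ _ hV',
    nuclearNorm_isometry_mul _ hU, frobSq_mul_coisometry _ _ hV', frobSq_isometry_mul _ hU]

theorem proxObjective_thresholdOn_add_le [DecidableEq n] {R : m → n → Prop} [DecidableRel R]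
    (hR : BiUnique R) {τ : ℝ} (hτ : 0 ≤ τ) {S : Matrix m n ℝ} (hS : ∀ i j, ¬R i j → S i j = 0)
    (hS₀ : ∀ i j, 0 ≤ S i j) (N : Matrix m n ℝ) :
    proxObjective τ S (thresholdOn R τ S) + 1 / 2 * frobSq (N - thresholdOn R τ S)
      ≤ proxObjective τ S N := by
  set T := thresholdOn R τ S
  have hT : ∀ i j, ¬R i j → T i j = 0 := fun i j h => if_neg h
  have hT₀ : ∀ i j, 0 ≤ T i j := fun i j => by
    simp only [T, thresholdOn, of_apply]; split_ifs <;> simp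
  have hentry (i : m) (j : n) :
      τ * T i j + (T i j - S i j) ^ 2 / 2 + (N i j - T i j) ^ 2 / 2
        ≤ τ * (if R i j then |N i j| else 0) + (N i j - S i j) ^ 2 / 2 := by
    by_cases h : R i j
    · simpa only [T, thresholdOn, of_apply, if_pos h] using threshold_prox_le hτ (hS₀ i j) (N i j)
    · simp [hT i j h, hS i j h, h]
  have hsum := Finset.sum_le_sum fun i (_ : i ∈ Finset.univ) =>
    Finset.sum_le_sum fun j (_ : j ∈ Finset.univ) => hentry i j
  simp only [Finset.sum_add_distrib, ← Finset.mul_sum, ← Finset.sum_div] at hsum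
  have hN := sum_ite_abs_le_nuclearNorm_of_biUnique hR N
  rw [proxObjective, proxObjective, nuclearNorm_eq_sum_of_biUnique hR hT hT₀]
  simp only [frobSq, Matrix.sub_apply]
  linarith [mul_le_mul_of_nonneg_left hN hτ]

/-- **Singular value thresholding solves the nuclear norm proximal problem.**
Let `Y = U·S·Vᵀ` be an SVD of `Y` (`U`, `V` orthogonal, `S` nonnegative and
diagonal), and for `τ > 0` let `D_τ(Y) = U·max(S − τI, 0)·Vᵀ`.  Then `D_τ(Y)`
is the unique minimizer of `τ‖M‖₊ + (1/2)‖M − Y‖_F²` over all `M`. -/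
theorem svt_solves_nuclear_prox (m n : ℕ) (Y : Matrix (Fin m) (Fin n) ℝ)
    (τ : ℝ) (hτ : 0 < τ)
    (U : Matrix (Fin m) (Fin m) ℝ) (S : Matrix (Fin m) (Fin n) ℝ)
    (V : Matrix (Fin n) (Fin n) ℝ)
    (hU : Uᵀ * U = 1) (hV : Vᵀ * V = 1)
    (hSdiag : ∀ (i : Fin m) (j : Fin n), (i : ℕ) ≠ (j : ℕ) → S i j = 0)
    (hSnonneg : ∀ (i : Fin m) (j : Fin n), 0 ≤ S i j)
    (hY : Y = U * S * Vᵀ)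
    (D : Matrix (Fin m) (Fin n) ℝ)
    (hD : D = U * (Matrix.of fun (i : Fin m) (j : Fin n) =>
      if (i : ℕ) = (j : ℕ) then max (S i j - τ) 0 else 0) * Vᵀ) :
    (∀ M : Matrix (Fin m) (Fin n) ℝ,
        τ * nuclearNorm D + (1 / 2) * frobSq (D - Y) ≤
        τ * nuclearNorm M + (1 / 2) * frobSq (M - Y)) ∧
    (∀ M : Matrix (Fin m) (Fin n) ℝ,
        τ * nuclearNorm M + (1 / 2) * frobSq (M - Y) =
        τ * nuclearNorm D + (1 / 2) * frobSq (D - Y) → M = D) := by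
  have hR : BiUnique fun (i : Fin m) (j : Fin n) => (i : ℕ) = j :=
    ⟨fun _ _ _ h h' => Fin.ext (h.trans h'.symm), fun _ _ _ h h' => Fin.ext (h.symm.trans h')⟩
  set T := thresholdOn (fun (i : Fin m) (j : Fin n) => (i : ℕ) = j) τ S
  replace hD : D = U * T * Vᵀ := hD
  have hM (M : Matrix (Fin m) (Fin n) ℝ) : M = U * (Uᵀ * M * V) * Vᵀ := by
    rw [← Matrix.mul_assoc, ← Matrix.mul_assoc, mul_eq_one_comm.mp hU, Matrix.one_mul,
      Matrix.mul_assoc, mul_eq_one_comm.mp hV, Matrix.mul_one]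
  have key (M : Matrix (Fin m) (Fin n) ℝ) :
      proxObjective τ Y D + 1 / 2 * frobSq (Uᵀ * M * V - T) ≤ proxObjective τ Y M :=
    calc proxObjective τ Y D + 1 / 2 * frobSq (Uᵀ * M * V - T)
        = proxObjective τ S T + 1 / 2 * frobSq (Uᵀ * M * V - T) := by
          rw [hY, hD, proxObjective_conj τ hU hV]
      _ ≤ proxObjective τ S (Uᵀ * M * V) :=
          proxObjective_thresholdOn_add_le hR hτ.le hSdiag hSnonneg _
      _ = proxObjective τ Y M := by rw [← proxObjective_conj τ hU hV, ← hM M, ← hY]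
  simp only [proxObjective] at key
  refine ⟨fun M => ?_, fun M hmin => ?_⟩
  · linarith [key M, frobSq_nonneg (Uᵀ * M * V - T)]
  · have hzero : frobSq (Uᵀ * M * V - T) = 0 := by
      linarith [key M, frobSq_nonneg (Uᵀ * M * V - T)]
    rw [frobSq_eq_zero_iff, sub_eq_zero] at hzero
    rw [hM M, hzero, hD]
end
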